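/- Let p be a prime and f = a₀ + a₁z + ⋯ + aₙzⁿ ∈ ℤ[z] a polynomial of degree n with p ∤ content(f). Suppose there exist indices j, k with 1 ≤ k+1 ≤ j ≤ n such that: (i) p ∤ aⱼ; (ii) v_p(aₖ)/(j−k) < v_p(aᵢ)/(j−i) for all 0 ≤ i ≤ j−1 with i ≠ k; (iii) gcd(v_p(aₖ), j−k) = 1. Then in any factorization f = f₁·f₂ in ℤ[z], one of the factors has degree ≤ n − j + k. -/

import Mathlib

/-!
Give the coefficient index `i` of a polynomial the weight `d · v_p(aᵢ) + m · i`, where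
`d = j - k` and `m = v_p(a_k)`. Hypotheses (i) and (ii) say that for `f` the minimal weight
`m · j` is attained exactly at `k` and `j`: the segment from `(k, m)` to `(j, 0)` is an edge
of the Newton polygon of `f`. As with Gauss's lemma, the face of minimal weight of a product
is the sum of the faces of the factors, so `f = f₁ f₂` splits `[k, j]` into two segments
`[r₀, r₁]` and `[s₀, s₁]` whose end points have equal weights. Equal weights at `r₀` and `r₁`
force `d ∣ m (r₁ - r₀)`, so by (iii) `d ∣ r₁ - r₀`, and likewise for the other factor. As the
two lengths add up to `d`, one factor carries the whole edge, so its degree is at least `d`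
and the other factor has degree at most `n - d`.
-/

open Polynomial

section SumValuation

variable {p : ℕ} [Fact p.Prime] {ι : Type*} {s : Finset ι} {f : ι → ℤ}

lemma exists_padicValInt_le_of_sum_ne_zero (hs : ∑ i ∈ s, f i ≠ 0) :
    ∃ i ∈ s, f i ≠ 0 ∧ padicValInt p (f i) ≤ padicValInt p (∑ i ∈ s, f i) := by
  by_contra! h
  have hdvd : (p : ℤ) ^ (padicValInt p (∑ i ∈ s, f i) + 1) ∣ ∑ i ∈ s, f i :=
    Finset.dvd_sum fun i hi => (padicValInt_dvd_iff _ _).2 (or_iff_not_imp_left.2 (h i hi))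
  have := ((padicValInt_dvd_iff _ _).1 hdvd).resolve_left hs
  omega

lemma padicValInt_sum_eq_of_lt [DecidableEq ι] {i₀ : ι} (hi₀ : i₀ ∈ s) (hf₀ : f i₀ ≠ 0)
    (hlt : ∀ i ∈ s, i ≠ i₀ → f i ≠ 0 → padicValInt p (f i₀) < padicValInt p (f i)) :
    ∑ i ∈ s, f i ≠ 0 ∧ padicValInt p (∑ i ∈ s, f i) = padicValInt p (f i₀) := by
  have hrest : (p : ℤ) ^ (padicValInt p (f i₀) + 1) ∣ ∑ i ∈ s.erase i₀, f i :=
    Finset.dvd_sum fun i hi => (padicValInt_dvd_iff _ _).2 <|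
      or_iff_not_imp_left.2 (hlt i (Finset.mem_of_mem_erase hi) (Finset.ne_of_mem_erase hi))
  have hndvd : ¬ (p : ℤ) ^ (padicValInt p (f i₀) + 1) ∣ ∑ i ∈ s, f i := by
    rw [← Finset.add_sum_erase s f hi₀, dvd_add_left hrest, padicValInt_dvd_iff]
    simp [hf₀]
  have hne : ∑ i ∈ s, f i ≠ 0 := fun h => hndvd (h ▸ dvd_zero _)
  refine ⟨hne, le_antisymm ?_ ?_⟩
  · by_contra! h
    exact hndvd ((padicValInt_dvd_iff _ _).2 (Or.inr h))
  · obtain ⟨i, hi, hfi, hle⟩ := exists_padicValInt_le_of_sum_ne_zero (p := p) hne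
    obtain rfl | h := eq_or_ne i i₀
    · exact hle
    · exact (hlt i hi h hfi).le.trans hle

end SumValuation

/-- The weight of the point `(i, v_p(gᵢ))` of the Newton diagram of `g` in the direction
`(m, d)`; it is only meaningful when `gᵢ ≠ 0`. -/
def newtonWeight (p d m : ℕ) (g : ℤ[X]) (i : ℕ) : ℕ :=
  d * padicValInt p (g.coeff i) + m * i

/-- The face of the Newton polygon of `g` cut out by the supporting line `d y + m x = μ` runs
from abscissa `r₀` to `r₁`. -/
structure IsNewtonFace (p d m : ℕ) (g : ℤ[X]) (μ r₀ r₁ : ℕ) : Prop where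
  coeff_left_ne_zero : g.coeff r₀ ≠ 0
  coeff_right_ne_zero : g.coeff r₁ ≠ 0
  newtonWeight_left : newtonWeight p d m g r₀ = μ
  newtonWeight_right : newtonWeight p d m g r₁ = μ
  le_newtonWeight : ∀ r, g.coeff r ≠ 0 → μ ≤ newtonWeight p d m g r
  lt_newtonWeight_of_lt : ∀ r, g.coeff r ≠ 0 → r < r₀ → μ < newtonWeight p d m g r
  lt_newtonWeight_of_gt : ∀ r, g.coeff r ≠ 0 → r₁ < r → μ < newtonWeight p d m g r

section NewtonFace

variable {p d m : ℕ} {f g h : ℤ[X]} {μ ν r₀ r₁ s₀ s₁ j k : ℕ}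

lemma exists_newtonWeight_add_le [Fact p.Prime] {i : ℕ} (hi : (g * h).coeff i ≠ 0) :
    ∃ r s, r + s = i ∧ g.coeff r ≠ 0 ∧ h.coeff s ≠ 0 ∧
      newtonWeight p d m g r + newtonWeight p d m h s ≤ newtonWeight p d m (g * h) i := by
  rw [coeff_mul] at hi
  obtain ⟨⟨r, s⟩, hrs, hne, hle⟩ := exists_padicValInt_le_of_sum_ne_zero (p := p) hi
  rw [Finset.HasAntidiagonal.mem_antidiagonal] at hrs
  have hg := left_ne_zero_of_mul hne
  have hh := right_ne_zero_of_mul hne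
  rw [padicValInt.mul hg hh, ← coeff_mul] at hle
  refine ⟨r, s, hrs, hg, hh, ?_⟩
  calc newtonWeight p d m g r + newtonWeight p d m h s
      = d * (padicValInt p (g.coeff r) + padicValInt p (h.coeff s)) + m * (r + s) := by
        simp only [newtonWeight]; ring
    _ ≤ newtonWeight p d m (g * h) i := by rw [newtonWeight, hrs]; gcongr

lemma newtonWeight_mul_eq_of_lt [Fact p.Prime] (hg : g.coeff r₀ ≠ 0) (hh : h.coeff s₀ ≠ 0)
    (hlt : ∀ r s, r + s = r₀ + s₀ → r ≠ r₀ → g.coeff r ≠ 0 → h.coeff s ≠ 0 →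
      newtonWeight p d m g r₀ + newtonWeight p d m h s₀ <
        newtonWeight p d m g r + newtonWeight p d m h s) :
    (g * h).coeff (r₀ + s₀) ≠ 0 ∧ newtonWeight p d m (g * h) (r₀ + s₀) =
      newtonWeight p d m g r₀ + newtonWeight p d m h s₀ := by
  have hsum := padicValInt_sum_eq_of_lt (p := p) (f := fun x : ℕ × ℕ => g.coeff x.1 * h.coeff x.2)
    (i₀ := (r₀, s₀)) (Finset.HasAntidiagonal.mem_antidiagonal.2 rfl) (mul_ne_zero hg hh)
    fun ⟨r, s⟩ hrs hne hrs0 => by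
      rw [Finset.HasAntidiagonal.mem_antidiagonal] at hrs
      have hr : r ≠ r₀ := fun hr => hne (by simp only [Prod.mk.injEq]; omega)
      have := hlt r s hrs hr (left_ne_zero_of_mul hrs0) (right_ne_zero_of_mul hrs0)
      simp only [newtonWeight] at this
      rw [padicValInt.mul hg hh, padicValInt.mul (left_ne_zero_of_mul hrs0)
        (right_ne_zero_of_mul hrs0)]
      exact Nat.lt_of_mul_lt_mul_left (a := d) (by nlinarith)
  rw [← coeff_mul, padicValInt.mul hg hh] at hsum
  refine ⟨hsum.1, ?_⟩
  simp only [newtonWeight, hsum.2]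
  ring

namespace IsNewtonFace

lemma left_le_right (hF : IsNewtonFace p d m g μ r₀ r₁) : r₀ ≤ r₁ := by
  by_contra! h
  have := hF.lt_newtonWeight_of_lt r₁ hF.coeff_right_ne_zero h
  have := hF.newtonWeight_right
  omega

lemma right_le_natDegree (hF : IsNewtonFace p d m g μ r₀ r₁) : r₁ ≤ g.natDegree :=
  le_natDegree_of_ne_zero hF.coeff_right_ne_zero

lemma unique {μ' r₀' r₁' : ℕ} (hF : IsNewtonFace p d m g μ r₀ r₁)
    (hF' : IsNewtonFace p d m g μ' r₀' r₁') : r₀ = r₀' ∧ r₁ = r₁' := by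
  have h₁ := hF.le_newtonWeight _ hF'.coeff_left_ne_zero
  have h₂ := hF'.le_newtonWeight _ hF.coeff_left_ne_zero
  have := hF.newtonWeight_left
  have := hF'.newtonWeight_left
  have := hF.newtonWeight_right
  have := hF'.newtonWeight_right
  constructor
  · rcases lt_trichotomy r₀ r₀' with h | h | h
    · have := hF'.lt_newtonWeight_of_lt _ hF.coeff_left_ne_zero h; omega
    · exact h
    · have := hF.lt_newtonWeight_of_lt _ hF'.coeff_left_ne_zero h; omega
  · rcases lt_trichotomy r₁ r₁' with h | h | h
    · have := hF.lt_newtonWeight_of_gt _ hF'.coeff_right_ne_zero h; omega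
    · exact h
    · have := hF'.lt_newtonWeight_of_gt _ hF.coeff_right_ne_zero h; omega

lemma add_le_newtonWeight_add (hg : IsNewtonFace p d m g μ r₀ r₁)
    (hh : IsNewtonFace p d m h ν s₀ s₁) {r s : ℕ} (hr : g.coeff r ≠ 0) (hs : h.coeff s ≠ 0) :
    μ + ν ≤ newtonWeight p d m g r + newtonWeight p d m h s :=
  add_le_add (hg.le_newtonWeight r hr) (hh.le_newtonWeight s hs)

lemma add_lt_newtonWeight_add (hg : IsNewtonFace p d m g μ r₀ r₁)
    (hh : IsNewtonFace p d m h ν s₀ s₁) {r s : ℕ} (hr : g.coeff r ≠ 0) (hs : h.coeff s ≠ 0)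
    (hout : r < r₀ ∨ s < s₀ ∨ r₁ < r ∨ s₁ < s) :
    μ + ν < newtonWeight p d m g r + newtonWeight p d m h s := by
  have := hg.le_newtonWeight r hr
  have := hh.le_newtonWeight s hs
  rcases hout with h | h | h | h
  · have := hg.lt_newtonWeight_of_lt r hr h; omega
  · have := hh.lt_newtonWeight_of_lt s hs h; omega
  · have := hg.lt_newtonWeight_of_gt r hr h; omega
  · have := hh.lt_newtonWeight_of_gt s hs h; omega

theorem mul [Fact p.Prime] (hg : IsNewtonFace p d m g μ r₀ r₁)
    (hh : IsNewtonFace p d m h ν s₀ s₁) :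
    IsNewtonFace p d m (g * h) (μ + ν) (r₀ + s₀) (r₁ + s₁) := by
  have hg₀ := hg.left_le_right
  have hh₀ := hh.left_le_right
  have left := newtonWeight_mul_eq_of_lt (p := p) (d := d) (m := m)
    hg.coeff_left_ne_zero hh.coeff_left_ne_zero fun r s hrs hr hgr hhs => by
      rw [hg.newtonWeight_left, hh.newtonWeight_left]
      exact hg.add_lt_newtonWeight_add hh hgr hhs (by omega)
  have right := newtonWeight_mul_eq_of_lt (p := p) (d := d) (m := m)
    hg.coeff_right_ne_zero hh.coeff_right_ne_zero fun r s hrs hr hgr hhs => by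
      rw [hg.newtonWeight_right, hh.newtonWeight_right]
      exact hg.add_lt_newtonWeight_add hh hgr hhs (by omega)
  refine ⟨left.1, right.1, ?_, ?_, fun i hi => ?_, fun i hi hlt => ?_, fun i hi hlt => ?_⟩
  · rw [left.2, hg.newtonWeight_left, hh.newtonWeight_left]
  · rw [right.2, hg.newtonWeight_right, hh.newtonWeight_right]
  all_goals
    obtain ⟨r, s, rfl, hr, hs, hle⟩ := exists_newtonWeight_add_le (p := p) (d := d) (m := m) hi
  · exact (hg.add_le_newtonWeight_add hh hr hs).trans hle
  · exact (hg.add_lt_newtonWeight_add hh hr hs (by omega)).trans_le hle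
  · exact (hg.add_lt_newtonWeight_add hh hr hs (by omega)).trans_le hle

/-- Equal weights at the two ends give `m r₀ ≡ m r₁ (mod d)`. -/
lemma dvd_sub (hF : IsNewtonFace p d m g μ r₀ r₁) (hmd : m.Coprime d) : d ∣ r₁ - r₀ := by
  have hmod : m * r₀ ≡ m * r₁ [MOD d] := by
    have := congrArg (· % d) (hF.newtonWeight_left.trans hF.newtonWeight_right.symm)
    simpa only [newtonWeight, Nat.mul_add_mod, Nat.ModEq] using this
  exact (Nat.modEq_iff_dvd' hF.left_le_right).1 (Nat.ModEq.cancel_left_of_coprime hmd.symm hmod)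

end IsNewtonFace

lemma exists_isNewtonFace (hg : g ≠ 0) : ∃ μ r₀ r₁, IsNewtonFace p d m g μ r₀ r₁ := by
  classical
  obtain ⟨r, hr, hmin⟩ :=
    g.support.exists_min_image (newtonWeight p d m g) (nonempty_support_iff.2 hg)
  set T := g.support.filter (newtonWeight p d m g · = newtonWeight p d m g r)
  have hT : T.Nonempty := ⟨r, Finset.mem_filter.2 ⟨hr, rfl⟩⟩
  have hmemT {r'} (hr' : g.coeff r' ≠ 0)
      (hlt : ¬ newtonWeight p d m g r < newtonWeight p d m g r') : r' ∈ T :=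
    Finset.mem_filter.2 ⟨mem_support_iff.2 hr',
      le_antisymm (not_lt.1 hlt) (hmin _ (mem_support_iff.2 hr'))⟩
  obtain ⟨h₀s, h₀w⟩ := Finset.mem_filter.1 (T.min'_mem hT)
  obtain ⟨h₁s, h₁w⟩ := Finset.mem_filter.1 (T.max'_mem hT)
  refine ⟨_, T.min' hT, T.max' hT, mem_support_iff.1 h₀s, mem_support_iff.1 h₁s, h₀w, h₁w,
    fun r' hr' => hmin r' (mem_support_iff.2 hr'), fun r' hr' hlt => ?_, fun r' hr' hlt => ?_⟩
  · by_contra h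
    exact (T.min'_le r' (hmemT hr' h)).not_gt hlt
  · by_contra h
    exact (T.le_max' r' (hmemT hr' h)).not_gt hlt

/-- The faces of the factors have lengths divisible by `j - k` and adding up to `j - k`, so one
of them is the whole edge and that factor has degree at least `j - k`. -/
theorem IsNewtonFace.natDegree_le_of_eq_mul [Fact p.Prime]
    (hF : IsNewtonFace p (j - k) m f μ k j) (hmd : m.Coprime (j - k)) (hfgh : f = g * h) :
    g.natDegree ≤ f.natDegree - (j - k) ∨ h.natDegree ≤ f.natDegree - (j - k) := by
  subst hfgh
  have hgh : g * h ≠ 0 := fun h0 => hF.coeff_left_ne_zero (by simp [h0])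
  obtain ⟨hg, hh⟩ := mul_ne_zero_iff.1 hgh
  obtain ⟨μ₁, r₀, r₁, hG⟩ := exists_isNewtonFace (p := p) (d := j - k) (m := m) hg
  obtain ⟨μ₂, s₀, s₁, hH⟩ := exists_isNewtonFace (p := p) (d := j - k) (m := m) hh
  obtain ⟨rfl, rfl⟩ := (hG.mul hH).unique hF
  have hdeg := natDegree_mul hg hh
  have := hG.left_le_right
  have := hH.left_le_right
  have := hG.right_le_natDegree
  have := hH.right_le_natDegree
  rcases Nat.eq_zero_or_pos (r₁ - r₀) with h0 | hpos
  · omega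
  · have := Nat.le_of_dvd hpos (hG.dvd_sub hmd)
    omega

lemma isNewtonFace_of_slope_lt (hkj : k < j) (hk : f.coeff k ≠ 0)
    (hj : ¬ (p : ℤ) ∣ f.coeff j) (hv : 0 < padicValInt p (f.coeff k))
    (hslope : ∀ i < j, i ≠ k → f.coeff i ≠ 0 →
      (j - i) * padicValInt p (f.coeff k) < (j - k) * padicValInt p (f.coeff i)) :
    IsNewtonFace p (j - k) (padicValInt p (f.coeff k)) f (padicValInt p (f.coeff k) * j) k j := by
  set v := padicValInt p (f.coeff k) with hv_def
  have hwk : newtonWeight p (j - k) v f k = v * j := by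
    rw [newtonWeight, ← hv_def]
    zify [hkj.le]
    ring
  have hwj : newtonWeight p (j - k) v f j = v * j := by
    rw [newtonWeight, padicValInt.eq_zero_of_not_dvd hj, mul_zero, zero_add]
  have hlt : ∀ i, f.coeff i ≠ 0 → i ≠ k → i ≠ j → v * j < newtonWeight p (j - k) v f i := by
    intro i hi hik hij
    rw [newtonWeight]
    rcases lt_or_gt_of_ne hij with h | h
    · have := hslope i h hik hi
      zify [h.le, hkj.le] at this ⊢
      nlinarith
    · nlinarith
  refine ⟨hk, fun h => hj (h ▸ dvd_zero _), hwk, hwj, fun i hi => ?_,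
    fun i hi hik => hlt i hi hik.ne (by omega), fun i hi hji => hlt i hi (by omega) hji.ne'⟩
  rcases eq_or_ne i k with rfl | hik
  · exact hwk.ge
  rcases eq_or_ne i j with rfl | hij
  · exact hwj.ge
  exact (hlt i hi hik hij).le

end NewtonFace

theorem stmt_9_general (p : ℕ) (hp : p.Prime) (f : Polynomial ℤ) (n j k : ℕ)
    (vp : ℤ → WithTop ℤ)
    (hvp : ∀ a : ℤ, vp a = if a = 0 then ⊤ else ((padicValInt p a : ℤ) : WithTop ℤ))
    (hdeg : f.natDegree = n) (hk : k + 1 ≤ j)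
    (hj0 : ¬ (p : ℤ) ∣ f.coeff j)
    (hk0 : f.coeff k ≠ 0)
    (hii : ∀ i : ℕ, i < j → i ≠ k →
      ((((j : ℤ) - i) * (padicValInt p (f.coeff k) : ℤ) : ℤ) : WithTop ℤ) <
        ((((j : ℤ) - k) : ℤ) : WithTop ℤ) * vp (f.coeff i))
    (hgcd : Nat.gcd (padicValInt p (f.coeff k)) (j - k) = 1) :
    ∀ f₁ f₂ : Polynomial ℤ, f = f₁ * f₂ →
      f₁.natDegree ≤ n - j + k ∨ f₂.natDegree ≤ n - j + k := by
  intro f₁ f₂ hf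
  have : Fact p.Prime := ⟨hp⟩
  have hfj : f.coeff j ≠ 0 := fun h => hj0 (h ▸ dvd_zero _)
  have hjn : j ≤ n := hdeg ▸ le_natDegree_of_ne_zero hfj
  obtain ⟨hf₁, hf₂⟩ : f₁ ≠ 0 ∧ f₂ ≠ 0 := mul_ne_zero_iff.1 (hf ▸ fun h0 => hfj (by simp [h0]))
  have hdeg₁₂ : f₁.natDegree + f₂.natDegree = n := hdeg ▸ hf ▸ (natDegree_mul hf₁ hf₂).symm
  obtain hv | hv := Nat.eq_zero_or_pos (padicValInt p (f.coeff k))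
  · have : j - k = 1 := by simpa [hv] using hgcd
    omega
  have hslope : ∀ i < j, i ≠ k → f.coeff i ≠ 0 →
      (j - i) * padicValInt p (f.coeff k) < (j - k) * padicValInt p (f.coeff i) := by
    intro i hij hik hi
    have h := hii i hij hik
    rw [hvp, if_neg hi, ← WithTop.coe_mul, WithTop.coe_lt_coe] at h
    zify [hij.le, (by omega : k ≤ j)]
    exact h
  have := (isNewtonFace_of_slope_lt (by omega) hk0 hj0 hv hslope).natDegree_le_of_eq_mul hgcd hf
  rw [hdeg] at this
  omega

/-- Theorem B of the paper for (ℤ, v_p): any factorization of f in ℤ[z]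
has a factor of degree ≤ n - j + k. -/
theorem stmt_9 (p : ℕ) (hp : p.Prime) (f : Polynomial ℤ) (n j k : ℕ)
    (vp : ℤ → WithTop ℤ)
    (hvp : ∀ a : ℤ, vp a = if a = 0 then ⊤ else ((padicValInt p a : ℤ) : WithTop ℤ))
    (hdeg : f.natDegree = n) (hk : k + 1 ≤ j) (hjn : j ≤ n)
    (hcont : ¬ (p : ℤ) ∣ f.content)
    (hj0 : ¬ (p : ℤ) ∣ f.coeff j)
    (hk0 : f.coeff k ≠ 0)
    (hii : ∀ i : ℕ, i < j → i ≠ k →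
      ((((j : ℤ) - i) * (padicValInt p (f.coeff k) : ℤ) : ℤ) : WithTop ℤ) <
        ((((j : ℤ) - k) : ℤ) : WithTop ℤ) * vp (f.coeff i))
    (hgcd : Nat.gcd (padicValInt p (f.coeff k)) (j - k) = 1) :
    ∀ f₁ f₂ : Polynomial ℤ, f = f₁ * f₂ →
      f₁.natDegree ≤ n - j + k ∨ f₂.natDegree ≤ n - j + k :=
  stmt_9_general p hp f n j k vp hvp hdeg hk hj0 hk0 hii hgcd
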